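/- Let α < 1 be real, let V : ℕ × ℕ → ℝ be weights, let (n_1,…,n_k) be positive integers with sum n and V(n,k) ≠ 0, let (s_1,…,s_{k*}) be positive integers with sum s, and let m ≥ s. For the Gibbs EPPF p of type α with weights V: ∑ binom(m, m−s) · ((m−s)!/(m_1!⋯m_k!)) · p(n_1+m_1,…,n_k+m_k, s_1,…,s_{k*}) / p(n_1,…,n_k) = (V(n+m, k+k*)/V(n,k)) · binom(m, m−s) · (n − kα)_{m−s↑} · ∏_{i=1}^{k*} (1−α)_{s_i−1↑}, where the sum ranges over all k-tuples (m_1,…,m_k) of nonnegative integers with m_1 + ⋯ + m_k = m − s. -/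

import Mathlib

/-!
Each factor `(1-α)_{n_j+m_j-1↑}` splits as `(1-α)_{n_j-1↑} (n_j-α)_{m_j↑}`, so every summand
is `V(n+m,k+k*)/V(n,k) · binom(m,m-s) · ∏_i (1-α)_{s_i-1↑}` times the multinomial term
`((m-s)!/∏ m_j!) ∏_j (n_j-α)_{m_j↑}`. Rising factorials are of binomial type (Chu–Vandermonde),
so these terms sum to `(∑_j (n_j-α))_{m-s↑} = (n-kα)_{m-s↑}`.
-/

/-- Rising factorial `(x)_{n↑} = ∏_{i=0}^{n-1} (x + i)`. -/
noncomputable def risefac (x : ℝ) (n : ℕ) : ℝ := ∏ i ∈ Finset.range n, (x + i)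

open Finset

theorem Finset.Nat.sum_antidiagonalTuple_succ {M : Type*} [AddCommMonoid M] (k n : ℕ)
    (F : (Fin (k + 1) → ℕ) → M) :
    ∑ f ∈ antidiagonalTuple (k + 1) n, F f
      = ∑ ij ∈ antidiagonal n, ∑ g ∈ antidiagonalTuple k ij.2, F (Fin.cons ij.1 g) := by
  -- `antidiagonalTuple (k + 1) n` is by definition a `flatMap` over `antidiagonal n`.
  show ((List.Nat.antidiagonalTuple (k + 1) n : Multiset _).map F).sum = _
  rw [List.Nat.antidiagonalTuple, ← Multiset.coe_bind, Multiset.map_bind, Multiset.sum_bind]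
  simp only [← Multiset.map_coe, Multiset.map_map]
  rfl

@[simp]
lemma risefac_zero (x : ℝ) : risefac x 0 = 1 := prod_range_zero _

lemma risefac_succ (x : ℝ) (n : ℕ) : risefac x (n + 1) = risefac x n * (x + n) :=
  prod_range_succ _ _

lemma risefac_add (x : ℝ) (a b : ℕ) : risefac x (a + b) = risefac x a * risefac (x + a) b := by
  simp only [risefac, prod_range_add, Nat.cast_add, add_assoc]

lemma risefac_pos {x : ℝ} (hx : 0 < x) (n : ℕ) : 0 < risefac x n :=
  prod_pos fun _ _ => by positivity

lemma risefac_eq_neg_one_pow_mul_descPochhammer (x : ℝ) (n : ℕ) :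
    risefac x n = (-1) ^ n * (descPochhammer ℤ n).smeval (-x) := by
  induction n with
  | zero => simp
  | succ n ih =>
    rw [risefac_succ, ih, descPochhammer_succ_right, Polynomial.smeval_mul]
    simp [Polynomial.smeval_sub, Polynomial.smeval_X, Polynomial.smeval_natCast, pow_succ]
    ring

lemma risefac_add_eq_sum_antidiagonal (x y : ℝ) (n : ℕ) :
    risefac (x + y) n =
      ∑ ij ∈ antidiagonal n, (n.choose ij.1 : ℝ) * risefac x ij.1 * risefac y ij.2 := by
  rw [risefac_eq_neg_one_pow_mul_descPochhammer, neg_add,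
    Ring.descPochhammer_smeval_add n (Commute.all _ _), mul_sum]
  refine sum_congr rfl fun ij hij => ?_
  rw [← mem_antidiagonal.mp hij, risefac_eq_neg_one_pow_mul_descPochhammer,
    risefac_eq_neg_one_pow_mul_descPochhammer, pow_add]
  ring

lemma risefac_sum_eq_sum_antidiagonalTuple (k : ℕ) (x : Fin k → ℝ) (n : ℕ) :
    risefac (∑ j, x j) n = ∑ f ∈ Nat.antidiagonalTuple k n,
      ((n.factorial : ℝ) / ∏ j, ((f j).factorial : ℝ)) * ∏ j, risefac (x j) (f j) := by
  induction k generalizing n with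
  | zero =>
    cases n with
    | zero => simp
    | succ n => simp [risefac, prod_range_succ']
  | succ k ih =>
    rw [Nat.sum_antidiagonalTuple_succ, Fin.sum_univ_succ, risefac_add_eq_sum_antidiagonal]
    refine sum_congr rfl fun ij hij => ?_
    rw [ih, mul_sum]
    refine sum_congr rfl fun g _ => ?_
    have hfac : (n.factorial : ℝ) = n.choose ij.1 * ij.1.factorial * ij.2.factorial := by
      rw [← mem_antidiagonal.mp hij, Nat.choose_symm_add]
      exact_mod_cast (Nat.add_choose_mul_factorial_mul_factorial ij.1 ij.2).symm
    simp only [Fin.prod_univ_succ, Fin.cons_zero, Fin.cons_succ, hfac]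
    field_simp

lemma risefac_one_sub_add_pred (α : ℝ) {a : ℕ} (ha : 0 < a) (b : ℕ) :
    risefac (1 - α) (a + b - 1) = risefac (1 - α) (a - 1) * risefac (a - α) b := by
  rw [show a + b - 1 = (a - 1) + b by omega, risefac_add, Nat.cast_pred ha]
  ring_nf

theorem gibbs_marginal_old_allocation_general (α : ℝ) (hα : α < 1) (V : ℕ → ℕ → ℝ)
    (k : ℕ) (nvec : Fin k → ℕ) (hpos : ∀ j, 0 < nvec j)
    (n : ℕ) (hsum : ∑ j, nvec j = n)
    (kstar : ℕ) (svec : Fin kstar → ℕ)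
    (s : ℕ) (m : ℕ) :
    ∑ f ∈ Finset.Nat.antidiagonalTuple k (m - s),
        (m.choose (m - s) : ℝ) *
          (((m - s).factorial : ℝ) / ∏ j, ((f j).factorial : ℝ)) *
          ((V (n + m) (k + kstar) * ((∏ j, risefac (1 - α) (nvec j + f j - 1)) *
              ∏ i, risefac (1 - α) (svec i - 1))) /
            (V n k * ∏ j, risefac (1 - α) (nvec j - 1)))
      = (V (n + m) (k + kstar) / V n k) * (m.choose (m - s) : ℝ) *
          risefac ((n : ℝ) - k * α) (m - s) * ∏ i, risefac (1 - α) (svec i - 1) := by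
  set C := V (n + m) (k + kstar) / V n k * (m.choose (m - s) : ℝ) *
    ∏ i, risefac (1 - α) (svec i - 1) with hC
  have hB : ∏ j, risefac (1 - α) (nvec j - 1) ≠ 0 :=
    (prod_pos fun j _ => risefac_pos (by linarith) _).ne'
  have hsplit (f : Fin k → ℕ) : ∏ j, risefac (1 - α) (nvec j + f j - 1) =
      (∏ j, risefac (1 - α) (nvec j - 1)) * ∏ j, risefac (nvec j - α) (f j) := by
    rw [← prod_mul_distrib]
    exact prod_congr rfl fun j _ => risefac_one_sub_add_pred α (hpos j) (f j)
  have hx : ∑ j, ((nvec j : ℝ) - α) = n - k * α := by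
    simp [sum_sub_distrib, ← hsum]
  calc _ = ∑ f ∈ Nat.antidiagonalTuple k (m - s), C *
        ((((m - s).factorial : ℝ) / ∏ j, ((f j).factorial : ℝ)) *
          ∏ j, risefac (nvec j - α) (f j)) :=
        sum_congr rfl fun f _ => by rw [hsplit, hC]; field_simp
    _ = C * risefac (n - k * α) (m - s) := by
        rw [← mul_sum, ← risefac_sum_eq_sum_antidiagonalTuple, hx]
    _ = _ := by ring

/-- Marginalizing the Gibbs seating probabilities over the allocation of the `m−s`
customers seated at old tables:
`∑ binom(m,m−s) ((m−s)!/(m_1!⋯m_k!)) p(n_1+m_1,…,n_k+m_k,s_1,…,s_{k*})/p(n_1,…,n_k)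
  = (V(n+m,k+k*)/V(n,k)) binom(m,m−s) (n−kα)_{m−s↑} ∏_i (1−α)_{s_i−1↑}`,
the sum over nonnegative tuples `(m_1,…,m_k)` with sum `m−s`, where
`p(n_1,…,n_k) = V(n,k) ∏_j (1−α)_{n_j−1↑}`. -/
theorem gibbs_marginal_old_allocation (α : ℝ) (hα : α < 1) (V : ℕ → ℕ → ℝ)
    (k : ℕ) (nvec : Fin k → ℕ) (hpos : ∀ j, 0 < nvec j)
    (n : ℕ) (hsum : ∑ j, nvec j = n) (hVn : V n k ≠ 0)
    (kstar : ℕ) (svec : Fin kstar → ℕ) (hsv : ∀ i, 0 < svec i)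
    (s : ℕ) (hssum : ∑ i, svec i = s) (m : ℕ) (hsm : s ≤ m) :
    ∑ f ∈ Finset.Nat.antidiagonalTuple k (m - s),
        (m.choose (m - s) : ℝ) *
          (((m - s).factorial : ℝ) / ∏ j, ((f j).factorial : ℝ)) *
          ((V (n + m) (k + kstar) * ((∏ j, risefac (1 - α) (nvec j + f j - 1)) *
              ∏ i, risefac (1 - α) (svec i - 1))) /
            (V n k * ∏ j, risefac (1 - α) (nvec j - 1)))
      = (V (n + m) (k + kstar) / V n k) * (m.choose (m - s) : ℝ) *
          risefac ((n : ℝ) - k * α) (m - s) * ∏ i, risefac (1 - α) (svec i - 1) :=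
  gibbs_marginal_old_allocation_general α hα V k nvec hpos n hsum kstar svec s m
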